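/- arXiv:1612.04740 — 2 statements merged into one kernel-verified Lean document; each statement's English description precedes it below -/
import Mathlib

section
/- Let μ* ∈ H^n be non-constant with true segmentation τ*. Then for any segmentation τ ∈ T_n: (1/n)‖μ* − Π_τ μ*‖² ≥ (1/2) min{ Λ̲_{τ*}, (1/n) d∞^{(1)}(τ*, τ) } Δ̲². -/
open MeasureTheory ProbabilityTheory

/-- A segmentation of `{1, …, n}` with `D` segments: integers
`0 = t 0 < t 1 < ⋯ < t D = n`. -/
structure Seg (n : ℕ) where
  D : ℕ
  t : ℕ → ℕ
  hD : 0 < D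
  h0 : t 0 = 0
  hn : t D = n
  hmono : ∀ ℓ < D, t ℓ < t (ℓ + 1)

namespace Seg

variable {n : ℕ}

/-- The `ℓ`-th segment (`0`-based) of a segmentation, as a set of `0`-based indices:
it corresponds to the paper's segment `λ_{ℓ+1} = {t ℓ + 1, …, t (ℓ+1)}` (1-based). -/
def seg (τ : Seg n) (ℓ : ℕ) : Finset (Fin n) :=
  Finset.univ.filter fun j => τ.t ℓ ≤ (j : ℕ) ∧ (j : ℕ) < τ.t (ℓ + 1)

/-- `Λ̲_τ`: normalized size of the smallest segment. -/
noncomputable def lamMin (τ : Seg n) : ℝ :=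
  (((Finset.range τ.D).inf' (Finset.nonempty_range_iff.mpr τ.hD.ne')
      fun ℓ => τ.t (ℓ + 1) - τ.t ℓ : ℕ) : ℝ) / n

/-- `Λ̄_τ`: normalized size of the largest segment. -/
noncomputable def lamMax (τ : Seg n) : ℝ :=
  (((Finset.range τ.D).sup' (Finset.nonempty_range_iff.mpr τ.hD.ne')
      fun ℓ => τ.t (ℓ + 1) - τ.t ℓ : ℕ) : ℝ) / n

/-- `d∞^{(1)}(τ¹,τ²) = max_{1 ≤ i ≤ D₁−1} min_{1 ≤ j ≤ D₂−1} |τ¹_i − τ²_j|`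
(with natural conventions in the degenerate cases where a segmentation has no
interior change-point). -/
noncomputable def dinf1 (τ1 τ2 : Seg n) : ℕ :=
  if h : 2 ≤ τ1.D ∧ 2 ≤ τ2.D then
    (Finset.Ioo 0 τ1.D).sup fun i =>
      (Finset.Ioo 0 τ2.D).inf' ⟨1, Finset.mem_Ioo.mpr ⟨Nat.one_pos, by omega⟩⟩
        fun j => Nat.dist (τ1.t i) (τ2.t j)
  else if τ1.D = τ2.D then 0 else n

/-- `d∞^{(2)}(τ¹,τ²) = max_{1 ≤ i ≤ D₁−1} min_{0 ≤ j ≤ D₂} |τ¹_i − τ²_j|`. -/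
noncomputable def dinf2 (τ1 τ2 : Seg n) : ℕ :=
  (Finset.Ioo 0 τ1.D).sup fun i =>
    (Finset.Icc 0 τ2.D).inf' ⟨0, Finset.mem_Icc.mpr ⟨le_rfl, Nat.zero_le _⟩⟩
      fun j => Nat.dist (τ1.t i) (τ2.t j)

/-- `d∞^{(3)}(τ¹,τ²) = max_{1 ≤ i ≤ D₁−1} |τ¹_i − τ²_i|` (meaningful when `D₁ = D₂`). -/
noncomputable def dinf3 (τ1 τ2 : Seg n) : ℕ :=
  (Finset.Ioo 0 τ1.D).sup fun i => Nat.dist (τ1.t i) (τ2.t i)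

/-- `d_H^{(1)}`. -/
noncomputable def dH1 (τ1 τ2 : Seg n) : ℕ := max (dinf1 τ1 τ2) (dinf1 τ2 τ1)

/-- `d_H^{(2)}`. -/
noncomputable def dH2 (τ1 τ2 : Seg n) : ℕ := max (dinf2 τ1 τ2) (dinf2 τ2 τ1)

/-- The matrix of the orthogonal projection `Π_τ`:
`(Π_τ)_{ij} = 1/|λ|` if `i, j` are in the same segment `λ` of `τ`, and `0` otherwise. -/
noncomputable def Pmat (τ : Seg n) : Fin n → Fin n → ℝ := fun i j =>
  ∑ ℓ ∈ Finset.range τ.D, if i ∈ τ.seg ℓ ∧ j ∈ τ.seg ℓ then ((τ.seg ℓ).card : ℝ)⁻¹ else 0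

/-- The Frobenius loss `d_F(τ¹,τ²) = ‖Π_{τ¹} − Π_{τ²}‖_F`. -/
noncomputable def dF (τ1 τ2 : Seg n) : ℝ :=
  Real.sqrt (∑ i, ∑ j, (Pmat τ1 i j - Pmat τ2 i j) ^ 2)

/-- The orthogonal projection `Π_τ : H^n → H^n` onto vectors constant on each segment
of `τ`: `(Π_τ x)_i` is the average of `x` over the segment of `τ` containing `i`. -/
noncomputable def proj {H : Type*} [AddCommGroup H] [Module ℝ H]
    (τ : Seg n) (x : Fin n → H) : Fin n → H := fun i =>
  ∑ ℓ ∈ Finset.range τ.D,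
    if τ.t ℓ ≤ (i : ℕ) ∧ (i : ℕ) < τ.t (ℓ + 1)
    then (((τ.t (ℓ + 1) - τ.t ℓ : ℕ) : ℝ))⁻¹ • ∑ j ∈ τ.seg ℓ, x j
    else 0

end Seg

/-- Squared norm on `H^n`: `‖x‖² = Σ_i ‖x_i‖²`. -/
noncomputable def hnorm2 {n : ℕ} {H : Type*} [NormedAddCommGroup H] (x : Fin n → H) : ℝ :=
  ∑ i, ‖x i‖ ^ 2

/-- Inner product on `H^n`: `⟨x, y⟩ = Σ_i ⟨x_i, y_i⟩_H`. -/
noncomputable def hinner {n : ℕ} {H : Type*} [NormedAddCommGroup H] [InnerProductSpace ℝ H]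
    (x y : Fin n → H) : ℝ := ∑ i, inner ℝ (x i) (y i)

/-- `τ` is the true segmentation of `m ∈ H^n`: `m` is constant on every segment of `τ`
and jumps at every interior change-point of `τ`. -/
def IsTrueSeg {n : ℕ} {H : Type*} (τ : Seg n) (m : Fin n → H) : Prop :=
  (∀ ℓ < τ.D, ∀ i ∈ τ.seg ℓ, ∀ j ∈ τ.seg ℓ, m i = m j) ∧
  ∀ ℓ, 0 < ℓ → ℓ < τ.D → ∀ (h1 : τ.t ℓ - 1 < n) (h2 : τ.t ℓ < n),
    m ⟨τ.t ℓ - 1, h1⟩ ≠ m ⟨τ.t ℓ, h2⟩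

/-- The size `‖μ*_{t ℓ + 1} − μ*_{t ℓ}‖` (paper indexing) of the jump of `m` at
the change-point `t ℓ` of `τ`. -/
noncomputable def jumpAt {n : ℕ} {H : Type*} [NormedAddCommGroup H]
    (τ : Seg n) (m : Fin n → H) (ℓ : ℕ) : ℝ :=
  if h : 0 < τ.t ℓ ∧ τ.t ℓ < n then ‖m ⟨τ.t ℓ, h.2⟩ - m ⟨τ.t ℓ - 1, by omega⟩‖ else 0

/-- `Δ̲`: size of the smallest jump of `m` (over the change-points of `τ`). -/
noncomputable def deltaMin {n : ℕ} {H : Type*} [NormedAddCommGroup H]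
    (τ : Seg n) (m : Fin n → H) : ℝ :=
  if h : 2 ≤ τ.D then
    (Finset.Ioo 0 τ.D).inf' ⟨1, Finset.mem_Ioo.mpr ⟨Nat.one_pos, by omega⟩⟩ (jumpAt τ m)
  else 0

/-- `Δ̄`: size of the largest jump of `m` (over the change-points of `τ`). -/
noncomputable def deltaMax {n : ℕ} {H : Type*} [NormedAddCommGroup H]
    (τ : Seg n) (m : Fin n → H) : ℝ :=
  if h : 2 ≤ τ.D then
    (Finset.Ioo 0 τ.D).sup' ⟨1, Finset.mem_Ioo.mpr ⟨Nat.one_pos, by omega⟩⟩ (jumpAt τ m)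
  else 0

/-- The value of `m` at the first index of the `ℓ`-th segment of `τ`; if `m` is constant
on each segment of `τ`, this is the common value `μ*_{λ_ℓ}` of `m` on that segment. -/
noncomputable def segVal {n : ℕ} {H : Type*} [AddCommGroup H]
    (τ : Seg n) (m : Fin n → H) (ℓ : ℕ) : H :=
  if h : τ.t ℓ < n then m ⟨τ.t ℓ, h⟩ else 0

/-- `M_n = max_{1 ≤ k ≤ n} ‖ε_1 + ⋯ + ε_k‖` (the value at `k = 0` is `0`, which does not
affect the maximum). -/
noncomputable def Mmax {n : ℕ} {H : Type*} [NormedAddCommGroup H] (ε : Fin n → H) : ℝ :=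
  (Finset.range (n + 1)).sup' (Finset.nonempty_range_iff.mpr (Nat.succ_ne_zero n))
    fun k => ‖∑ j ∈ Finset.univ.filter (fun j : Fin n => (j : ℕ) < k), ε j‖


/-!
Let `i` be a true change-point realising `d = d∞^{(1)}(τ*, τ)` and let `s` be the length of the
shortest true segment. With `m = min s d`, the `m` indices on each side of `τ*_i` lie in a single
segment of `τ`, so `Π_τ μ*` equals one vector `c` there, while `μ*` equals `a` on the left half and
`b` on the right half, with `‖a - b‖ ≥ Δ̲`. Hence
`‖μ* − Π_τ μ*‖² ≥ m (‖a - c‖² + ‖b - c‖²) ≥ m ‖a - b‖² / 2 ≥ m Δ̲² / 2`.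
-/

open Finset

def window (n u v : ℕ) : Finset (Fin n) :=
  {k | u ≤ (k : ℕ) ∧ (k : ℕ) < v}

@[simp]
lemma mem_window {n u v : ℕ} {k : Fin n} : k ∈ window n u v ↔ u ≤ (k : ℕ) ∧ (k : ℕ) < v := by
  simp [window]

lemma card_window {n : ℕ} (u : ℕ) {v : ℕ} (hv : v ≤ n) : #(window n u v) = v - u := by
  have : window n u v = (Ico u v).attachFin fun k hk => (mem_Ico.1 hk).2.trans_le hv := by
    ext
    simp
  rw [this, card_attachFin, Nat.card_Ico]

lemma disjoint_window {n u v w : ℕ} : Disjoint (window n u v) (window n v w) :=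
  disjoint_filter.2 fun _ _ hk hk' => absurd hk'.1 (not_le.2 hk.2)

namespace Seg

variable {n : ℕ} (τ : Seg n)

lemma seg_eq_window (ℓ : ℕ) : τ.seg ℓ = window n (τ.t ℓ) (τ.t (ℓ + 1)) := rfl

lemma t_strictMonoOn : StrictMonoOn τ.t (Set.Iic τ.D) :=
  strictMonoOn_Iic_of_lt_succ τ.hmono

lemma t_le_t {a b : ℕ} (hab : a ≤ b) (hb : b ≤ τ.D) : τ.t a ≤ τ.t b :=
  τ.t_strictMonoOn.monotoneOn (Set.mem_Iic.2 (hab.trans hb)) (Set.mem_Iic.2 hb) hab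

lemma t_le_n (a : ℕ) (ha : a ≤ τ.D) : τ.t a ≤ n :=
  (τ.t_le_t ha le_rfl).trans_eq τ.hn

lemma proj_apply_of_mem_seg {H : Type*} [AddCommGroup H] [Module ℝ H] (x : Fin n → H)
    {ℓ : ℕ} (hℓ : ℓ < τ.D) {i : Fin n} (hi : i ∈ τ.seg ℓ) :
    τ.proj x i = ((τ.t (ℓ + 1) - τ.t ℓ : ℕ) : ℝ)⁻¹ • ∑ j ∈ τ.seg ℓ, x j := by
  rw [seg_eq_window, mem_window] at hi
  rw [proj, sum_eq_single_of_mem ℓ (mem_range.2 hℓ), if_pos hi]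
  intro b hb hbℓ
  rw [if_neg]
  rintro ⟨hb1, hb2⟩
  rcases lt_or_gt_of_ne hbℓ with h | h
  · have := τ.t_le_t (show b + 1 ≤ ℓ by omega) hℓ.le
    omega
  · have := τ.t_le_t (show ℓ + 1 ≤ b by omega) (mem_range.1 hb).le
    omega

lemma exists_seg_of_no_changePoint_between {u v : ℕ} (hv : v ≤ n)
    (h : ∀ j, 0 < j → j < τ.D → τ.t j ≤ u ∨ v ≤ τ.t j) :
    ∃ ℓ < τ.D, τ.t ℓ ≤ u ∧ v ≤ τ.t (ℓ + 1) := by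
  have hne : ((range τ.D).filter fun ℓ => τ.t ℓ ≤ u).Nonempty :=
    ⟨0, by simp [τ.h0, τ.hD]⟩
  obtain ⟨ℓ, hℓS, hℓmax⟩ := exists_max_image _ id hne
  simp only [mem_filter, mem_range] at hℓS
  refine ⟨ℓ, hℓS.1, hℓS.2, ?_⟩
  by_cases hlast : ℓ + 1 = τ.D
  · rw [hlast, τ.hn]
    exact hv
  · have hnext : ¬ τ.t (ℓ + 1) ≤ u := fun hle =>
      absurd (hℓmax (ℓ + 1) (by simp only [mem_filter, mem_range]; omega)) (by simp)
    exact (h (ℓ + 1) ℓ.succ_pos (by omega)).resolve_left hnext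

lemma exists_proj_eq_on_window {H : Type*} [AddCommGroup H] [Module ℝ H] (x : Fin n → H)
    {u v : ℕ} (hv : v ≤ n) (h : ∀ j, 0 < j → j < τ.D → τ.t j ≤ u ∨ v ≤ τ.t j) :
    ∃ c, ∀ k ∈ window n u v, τ.proj x k = c := by
  obtain ⟨ℓ, hℓD, hℓu, hℓv⟩ := τ.exists_seg_of_no_changePoint_between hv h
  refine ⟨_, fun k hk => τ.proj_apply_of_mem_seg x hℓD ?_⟩
  rw [mem_window] at hk
  rw [seg_eq_window, mem_window]
  omega

def minLen : ℕ :=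
  (range τ.D).inf' (nonempty_range_iff.mpr τ.hD.ne') fun ℓ => τ.t (ℓ + 1) - τ.t ℓ

lemma lamMin_eq : τ.lamMin = τ.minLen / n := rfl

lemma t_add_minLen_le {ℓ : ℕ} (hℓ : ℓ < τ.D) : τ.t ℓ + τ.minLen ≤ τ.t (ℓ + 1) := by
  have := inf'_le (fun ℓ => τ.t (ℓ + 1) - τ.t ℓ) (mem_range.2 hℓ)
  have := τ.hmono ℓ hℓ
  unfold minLen
  omega

lemma t_pred_add_minLen_le {i : ℕ} (hi0 : 0 < i) (hiD : i ≤ τ.D) :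
    τ.t (i - 1) + τ.minLen ≤ τ.t i := by
  simpa only [Nat.sub_add_cancel hi0] using τ.t_add_minLen_le (ℓ := i - 1) (by omega)

lemma exists_changePoint_le_dist_dinf1 (τ' : Seg n) (hD : 2 ≤ τ.D) :
    ∃ i, 0 < i ∧ i < τ.D ∧
      ∀ j, 0 < j → j < τ'.D → dinf1 τ τ' ≤ Nat.dist (τ.t i) (τ'.t j) := by
  by_cases hD' : 2 ≤ τ'.D
  · obtain ⟨i, hi, hsup⟩ := exists_mem_eq_sup (Ioo 0 τ.D)
      ⟨1, mem_Ioo.2 ⟨Nat.one_pos, hD⟩⟩ fun i => (Ioo 0 τ'.D).inf'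
        ⟨1, mem_Ioo.2 ⟨Nat.one_pos, hD'⟩⟩ fun j => Nat.dist (τ.t i) (τ'.t j)
    refine ⟨i, (mem_Ioo.1 hi).1, (mem_Ioo.1 hi).2, fun j hj0 hjD => ?_⟩
    rw [dinf1, dif_pos ⟨hD, hD'⟩, hsup]
    exact inf'_le _ (mem_Ioo.2 ⟨hj0, hjD⟩)
  · exact ⟨1, Nat.one_pos, hD, fun j hj0 hjD => by omega⟩

end Seg

section TrueSeg

variable {n : ℕ} {H : Type*} [NormedAddCommGroup H] {τ : Seg n} {μ : Fin n → H}

lemma deltaMin_nonneg : 0 ≤ deltaMin τ μ := by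
  unfold deltaMin jumpAt
  split
  · exact le_inf' _ _ fun ℓ _ => by split <;> positivity
  · exact le_rfl

lemma deltaMin_le_jumpAt {i : ℕ} (hi0 : 0 < i) (hiD : i < τ.D) :
    deltaMin τ μ ≤ jumpAt τ μ i := by
  rw [deltaMin, dif_pos (by omega)]
  exact inf'_le _ (mem_Ioo.2 ⟨hi0, hiD⟩)

lemma IsTrueSeg.exists_eq_on_windows_around (h : IsTrueSeg τ μ) {i m : ℕ} (hi0 : 0 < i)
    (hiD : i < τ.D) (hm : m ≤ τ.minLen) :
    ∃ a b, (∀ k ∈ window n (τ.t i - m) (τ.t i), μ k = a) ∧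
      (∀ k ∈ window n (τ.t i) (τ.t i + m), μ k = b) ∧ jumpAt τ μ i = ‖b - a‖ := by
  have hprev := τ.t_pred_add_minLen_le hi0 hiD.le
  have hnext := τ.t_add_minLen_le hiD
  have hlt : τ.t i < n := (τ.hmono i hiD).trans_le (τ.t_le_n _ hiD)
  have hpos : 0 < τ.t i := by
    have := τ.t_strictMonoOn (Set.mem_Iic.2 (Nat.zero_le _)) (Set.mem_Iic.2 hiD.le) hi0
    rwa [τ.h0] at this
  refine ⟨μ ⟨τ.t i - 1, by omega⟩, μ ⟨τ.t i, hlt⟩, fun k hk => ?_, fun k hk => ?_, ?_⟩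
  · rw [mem_window] at hk
    refine h.1 (i - 1) (by omega) k ?_ _ ?_ <;>
      simp only [Seg.seg_eq_window, mem_window, Nat.sub_add_cancel hi0] <;> omega
  · rw [mem_window] at hk
    refine h.1 i hiD k ?_ _ ?_ <;> simp only [Seg.seg_eq_window, mem_window] <;> omega
  · rw [jumpAt, dif_pos ⟨hpos, hlt⟩]

end TrueSeg

lemma norm_sub_sq_div_two_le {E : Type*} [SeminormedAddCommGroup E] (a b c : E) :
    ‖a - b‖ ^ 2 / 2 ≤ ‖a - c‖ ^ 2 + ‖b - c‖ ^ 2 := by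
  have htri : ‖a - b‖ ≤ ‖a - c‖ + ‖b - c‖ := by
    simpa only [norm_sub_rev c b] using norm_sub_le_norm_sub_add_norm_sub a c b
  nlinarith [sq_nonneg (‖a - c‖ - ‖b - c‖), mul_self_le_mul_self (norm_nonneg _) htri]

lemma mul_norm_sub_sq_le_sum_of_two_blocks {ι E : Type*} [Fintype ι] [DecidableEq ι]
    [SeminormedAddCommGroup E] {L R : Finset ι} (hLR : Disjoint L R) {f g : ι → E} {a b c : E}
    (hfL : ∀ k ∈ L, f k = a) (hfR : ∀ k ∈ R, f k = b) (hg : ∀ k ∈ L ∪ R, g k = c)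
    {m : ℕ} (hmL : m ≤ #L) (hmR : m ≤ #R) :
    m * (‖a - b‖ ^ 2 / 2) ≤ ∑ k, ‖f k - g k‖ ^ 2 := by
  have hL : ∑ k ∈ L, ‖f k - g k‖ ^ 2 = #L * ‖a - c‖ ^ 2 := by
    rw [sum_congr rfl fun k hk => by rw [hfL k hk, hg k (mem_union_left R hk)], sum_const,
      nsmul_eq_mul]
  have hR : ∑ k ∈ R, ‖f k - g k‖ ^ 2 = #R * ‖b - c‖ ^ 2 := by
    rw [sum_congr rfl fun k hk => by rw [hfR k hk, hg k (mem_union_right L hk)], sum_const,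
      nsmul_eq_mul]
  have hmL' : (m : ℝ) ≤ #L := by exact_mod_cast hmL
  have hmR' : (m : ℝ) ≤ #R := by exact_mod_cast hmR
  calc (m : ℝ) * (‖a - b‖ ^ 2 / 2)
      ≤ m * (‖a - c‖ ^ 2 + ‖b - c‖ ^ 2) := by
        gcongr
        exact norm_sub_sq_div_two_le a b c
    _ ≤ #L * ‖a - c‖ ^ 2 + #R * ‖b - c‖ ^ 2 := by
        rw [mul_add]
        gcongr
    _ = ∑ k ∈ L ∪ R, ‖f k - g k‖ ^ 2 := by rw [sum_union hLR, hL, hR]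
    _ ≤ ∑ k, ‖f k - g k‖ ^ 2 :=
        sum_le_sum_of_subset_of_nonneg (subset_univ _) fun k _ _ => by positivity

/-- Lemma 5.3: for any segmentation `τ`,
`(1/n)‖μ* − Π_τ μ*‖² ≥ (1/2) min{Λ̲_{τ*}, (1/n) d∞^{(1)}(τ*, τ)} Δ̲²`. -/
theorem approx_error_lower_bound_general {H : Type*}
    [NormedAddCommGroup H] [InnerProductSpace ℝ H]
    {n : ℕ} (μs : Fin n → H) (τs : Seg n) (hτs : IsTrueSeg τs μs) (hDs : 2 ≤ τs.D)
    (τ : Seg n) :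
    (1 / n) * hnorm2 (fun i => μs i - Seg.proj τ μs i)
      ≥ (1 / 2) * min (Seg.lamMin τs) ((Seg.dinf1 τs τ : ℝ) / n)
          * (deltaMin τs μs) ^ 2 := by
  obtain ⟨i, hi0, hiD, hfar⟩ := τs.exists_changePoint_le_dist_dinf1 τ hDs
  obtain ⟨m, hm⟩ : ∃ m, m = min τs.minLen (Seg.dinf1 τs τ) := ⟨_, rfl⟩
  obtain ⟨a, b, ha, hb, hjump⟩ := hτs.exists_eq_on_windows_around hi0 hiD (m := m) (by omega)
  have hprev := τs.t_pred_add_minLen_le hi0 hiD.le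
  have hnext := τs.t_add_minLen_le hiD
  have hend := τs.t_le_n (i + 1) hiD
  -- every change-point of `τ` is at distance `≥ dinf1 τs τ ≥ m` from `τs.t i`
  obtain ⟨c, hc⟩ := τ.exists_proj_eq_on_window μs (u := τs.t i - m) (v := τs.t i + m)
    (by omega) fun j hj0 hjD => by
      have := hfar j hj0 hjD
      unfold Nat.dist at this
      omega
  have hbound := mul_norm_sub_sq_le_sum_of_two_blocks disjoint_window ha hb
    (fun k hk => hc k (by simp only [mem_union, mem_window] at hk ⊢; omega)) (m := m)
    (by rw [card_window _ (by omega)]; omega) (by rw [card_window _ (by omega)]; omega)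
  have hΔ : deltaMin τs μs ≤ ‖a - b‖ :=
    (deltaMin_le_jumpAt hi0 hiD).trans_eq (hjump.trans (norm_sub_rev b a))
  rw [ge_iff_le, Seg.lamMin_eq, min_div_div_right n.cast_nonneg, ← Nat.cast_min, ← hm]
  calc 1 / 2 * (m / n) * deltaMin τs μs ^ 2 = 1 / n * (m * (deltaMin τs μs ^ 2 / 2)) := by ring
    _ ≤ 1 / n * (m * (‖a - b‖ ^ 2 / 2)) := by gcongr; exact deltaMin_nonneg
    _ ≤ 1 / n * hnorm2 (fun k => μs k - τ.proj μs k) := by gcongr; exact hbound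
end

section
/- Let μ* ∈ H^n be non-constant with true segmentation τ*, and let ε = (ε_1,…,ε_n) ∈ H^n. Then for any segmentation τ ∈ T_n: |⟨μ* − Π_τ μ*, ε⟩| ≤ 6 D_{τ*} · max{D_{τ*}, D_τ} · Δ̄ · M_n, where M_n := max_{1≤k≤n} ‖Σ_{j=1}^k ε_j‖_H. -/
open MeasureTheory ProbabilityTheory

/-!
Write `f = μ* - Π_τ μ*`, extended by `f_n = 0`, and `S_k = ε_1 + ⋯ + ε_k`. Summation by parts
turns `⟨f, ε⟩` into `Σ ⟨f_i - f_{i+1}, S_{i+1}⟩`, so `|⟨f, ε⟩|` is at most `M_n` times the total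
variation of `f`. Since `μ*` moves only at its `D_{τ*} - 1` change-points, and there by at most
`Δ̄`, all its values lie within `K = (D_{τ*} - 1) Δ̄` of each other; the segment averages
`Π_τ μ*` lie in their convex hull, hence within `K` of each other and of every `μ*_j`. The total
variation of `f` is therefore at most `K` (jumps of `μ*`) `+ (D_τ - 1) K` (jumps of `Π_τ μ*` at
the change-points of `τ`) `+ K` (the final drop to `f_n = 0`).
-/

open Finset

section ExtendZero

variable {n : ℕ} {E : Type*} [AddCommGroup E]

def extendZero (x : Fin n → E) (i : ℕ) : E :=
  if h : i < n then x ⟨i, h⟩ else 0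

@[simp]
lemma extendZero_val (x : Fin n → E) (i : Fin n) : extendZero x i = x i := by
  simp [extendZero]

lemma extendZero_of_lt (x : Fin n → E) {i : ℕ} (h : i < n) : extendZero x i = x ⟨i, h⟩ :=
  dif_pos h

lemma extendZero_self (x : Fin n → E) : extendZero x n = 0 :=
  dif_neg (lt_irrefl n)

lemma extendZero_sub (x y : Fin n → E) : extendZero (x - y) = extendZero x - extendZero y := by
  funext i
  by_cases h : i < n <;> simp [extendZero, h]

end ExtendZero

section SummationByParts

variable {H : Type*} [NormedAddCommGroup H] [InnerProductSpace ℝ H]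

lemma sum_inner_sub_eq (f S : ℕ → H) (m : ℕ) :
    ∑ i ∈ range m, inner ℝ (f i) (S (i + 1) - S i)
      = ∑ i ∈ range m, inner ℝ (f i - f (i + 1)) (S (i + 1))
        + inner ℝ (f m) (S m) - inner ℝ (f 0) (S 0) := by
  induction m with
  | zero => simp
  | succ m ih =>
    rw [sum_range_succ, sum_range_succ, ih]
    simp only [inner_sub_left, inner_sub_right]
    ring

lemma abs_sum_inner_sub_le {f S : ℕ → H} {m : ℕ} {M : ℝ} (hf : f m = 0) (hS : S 0 = 0)
    (hM : ∀ k ≤ m, ‖S k‖ ≤ M) :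
    |∑ i ∈ range m, inner ℝ (f i) (S (i + 1) - S i)|
      ≤ (∑ i ∈ range m, ‖f i - f (i + 1)‖) * M := by
  rw [sum_inner_sub_eq, hf, hS, inner_zero_left, inner_zero_right, add_zero, sub_zero, sum_mul]
  refine (abs_sum_le_sum_abs _ _).trans (sum_le_sum fun i hi => ?_)
  exact (abs_real_inner_le_norm _ _).trans
    (mul_le_mul_of_nonneg_left (hM _ (mem_range.mp hi)) (norm_nonneg _))

lemma hinner_eq_sum_inner_sub {n : ℕ} (x y : Fin n → H) :
    hinner x y = ∑ i ∈ range n, inner ℝ (extendZero x i)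
      ((∑ j ∈ range (i + 1), extendZero y j) - ∑ j ∈ range i, extendZero y j) := by
  simp only [sum_range_succ_sub_sum]
  rw [← Fin.sum_univ_eq_sum_range (fun i => inner ℝ (extendZero x i) (extendZero y i)) n]
  simp [hinner]

end SummationByParts

namespace Seg

variable {n : ℕ} (τ : Seg n)

lemma t_lt_n {ℓ : ℕ} (hℓ : ℓ < τ.D) : τ.t ℓ < n :=
  (τ.t_strictMonoOn (Set.mem_Iic.mpr hℓ.le) (Set.mem_Iic.mpr le_rfl) hℓ).trans_eq τ.hn

lemma n_pos (τ : Seg n) : 0 < n := τ.h0 ▸ τ.t_lt_n τ.hD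

lemma mem_seg {ℓ : ℕ} {i : Fin n} : i ∈ τ.seg ℓ ↔ τ.t ℓ ≤ i ∧ (i : ℕ) < τ.t (ℓ + 1) := by
  simp [seg]

lemma exists_mem_seg (i : Fin n) : ∃ ℓ < τ.D, i ∈ τ.seg ℓ := by
  classical
  have hex : ∃ ℓ, (i : ℕ) < τ.t ℓ := ⟨τ.D, i.isLt.trans_eq τ.hn.symm⟩
  have hpos : Nat.find hex ≠ 0 := fun h => by
    have := Nat.find_spec hex
    rw [h, τ.h0] at this
    omega
  have hle : Nat.find hex ≤ τ.D := Nat.find_min' hex (i.isLt.trans_eq τ.hn.symm)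
  have hprev : ¬ (i : ℕ) < τ.t (Nat.find hex - 1) := Nat.find_min hex (by omega)
  refine ⟨Nat.find hex - 1, by omega, τ.mem_seg.mpr ⟨by omega, ?_⟩⟩
  rw [Nat.sub_add_cancel (Nat.pos_of_ne_zero hpos)]
  exact Nat.find_spec hex

lemma card_seg {ℓ : ℕ} (hℓ : ℓ < τ.D) : #(τ.seg ℓ) = τ.t (ℓ + 1) - τ.t ℓ := by
  have hle : τ.t (ℓ + 1) ≤ n :=
    (τ.t_strictMonoOn.monotoneOn (Set.mem_Iic.mpr hℓ) (Set.mem_Iic.mpr le_rfl) hℓ).trans_eq τ.hn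
  rw [← Nat.card_Ico]
  refine card_bij (fun i _ => (i : ℕ)) (fun i hi => ?_) (fun i _ j _ h => Fin.ext h)
    fun k hk => ⟨⟨k, by simp at hk; omega⟩, τ.mem_seg.mpr (by simpa using hk), rfl⟩
  simpa [mem_Ico] using τ.mem_seg.mp hi

def changePoints : Finset ℕ := (Ioo 0 τ.D).image τ.t

lemma card_changePoints_le : #τ.changePoints ≤ τ.D - 1 :=
  card_image_le.trans (Nat.card_Ioo 0 τ.D).le

def ConstOnSegments {E : Type*} (x : Fin n → E) : Prop :=
  ∀ ℓ < τ.D, ∀ i ∈ τ.seg ℓ, ∀ j ∈ τ.seg ℓ, x i = x j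

section Average

variable {E : Type*} [AddCommGroup E] [Module ℝ E]

lemma proj_apply_eq_centerMass (x : Fin n → E) {ℓ : ℕ} (hℓ : ℓ < τ.D) {i : Fin n}
    (hi : i ∈ τ.seg ℓ) : proj τ x i = (τ.seg ℓ).centerMass (fun _ => (1 : ℝ)) x := by
  have hseg : ∀ k ∈ range τ.D, k ≠ ℓ → ¬ (τ.t k ≤ i ∧ (i : ℕ) < τ.t (k + 1)) := by
    rintro k hk hkℓ ⟨hk1, hk2⟩
    obtain ⟨hi1, hi2⟩ := τ.mem_seg.mp hi
    have mono := τ.t_strictMonoOn.monotoneOn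
    rcases Nat.lt_or_gt_of_ne hkℓ with h | h
    · have := mono (Set.mem_Iic.mpr (by omega : k + 1 ≤ τ.D)) (Set.mem_Iic.mpr hℓ.le)
        (by omega : k + 1 ≤ ℓ)
      omega
    · have := mono (Set.mem_Iic.mpr (by omega : ℓ + 1 ≤ τ.D))
        (Set.mem_Iic.mpr (mem_range.mp hk).le) (by omega : ℓ + 1 ≤ k)
      omega
  rw [proj, sum_eq_single_of_mem ℓ (mem_range.mpr hℓ) fun k hk hkℓ => if_neg (hseg k hk hkℓ),
    if_pos (τ.mem_seg.mp hi), ← τ.card_seg hℓ]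
  simp [centerMass]

lemma proj_mem_of_convex {s : Set E} (hs : Convex ℝ s) {x : Fin n → E} (hx : ∀ j, x j ∈ s)
    (i : Fin n) : proj τ x i ∈ s := by
  obtain ⟨ℓ, hℓ, hi⟩ := τ.exists_mem_seg i
  rw [τ.proj_apply_eq_centerMass x hℓ hi]
  exact hs.centerMass_mem (fun _ _ => zero_le_one)
    (by simpa using card_pos.mpr ⟨i, hi⟩) fun j _ => hx j

lemma constOnSegments_proj (x : Fin n → E) : τ.ConstOnSegments (proj τ x) :=
  fun _ hℓ _ hi _ hj => by
    rw [τ.proj_apply_eq_centerMass x hℓ hi, τ.proj_apply_eq_centerMass x hℓ hj]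

end Average

section Variation

variable {E : Type*} [NormedAddCommGroup E] {τ}

lemma ConstOnSegments.extendZero_succ {x : Fin n → E} (hx : τ.ConstOnSegments x) {i : ℕ}
    (hi : i + 1 < n) (hcp : i + 1 ∉ τ.changePoints) :
    extendZero x i = extendZero x (i + 1) := by
  obtain ⟨ℓ, hℓ, hmem⟩ := τ.exists_mem_seg ⟨i, by omega⟩
  have h1 : τ.t ℓ ≤ i := (τ.mem_seg.mp hmem).1
  have h2 : i < τ.t (ℓ + 1) := (τ.mem_seg.mp hmem).2
  have hnext : i + 1 < τ.t (ℓ + 1) := by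
    by_contra! hge
    have hℓ1 : ℓ + 1 < τ.D := by
      by_contra! hD
      have : ℓ + 1 = τ.D := by omega
      rw [this, τ.hn] at hge
      omega
    exact hcp (mem_image.mpr ⟨ℓ + 1, mem_Ioo.mpr ⟨by omega, hℓ1⟩, by omega⟩)
  rw [extendZero_of_lt x (by omega), extendZero_of_lt x hi]
  exact hx ℓ hℓ _ hmem _ (τ.mem_seg.mpr ⟨by simp; omega, hnext⟩)

lemma ConstOnSegments.sum_norm_sub_succ_le {x : Fin n → E} (hx : τ.ConstOnSegments x)
    {B : ℝ} (hB0 : 0 ≤ B) (hB : ∀ i, i + 1 < n → ‖extendZero x i - extendZero x (i + 1)‖ ≤ B) :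
    ∑ i ∈ range (n - 1), ‖extendZero x i - extendZero x (i + 1)‖ ≤ (τ.D - 1 : ℝ) * B := by
  classical
  set jumps := (range (n - 1)).filter fun i => i + 1 ∈ τ.changePoints
  have hjumps : #jumps ≤ τ.D - 1 :=
    (card_le_card_of_injOn (· + 1) (fun i hi => (mem_filter.mp hi).2)
      fun i _ j _ h => Nat.succ_injective h).trans τ.card_changePoints_le
  have hcast : (#jumps : ℝ) ≤ τ.D - 1 := by
    have := Nat.cast_le (α := ℝ).mpr hjumps
    rwa [Nat.cast_sub τ.hD, Nat.cast_one] at this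
  rw [← sum_filter_of_ne fun i hi hne => by_contra fun hcp =>
    hne (by rw [hx.extendZero_succ (by simp at hi; omega) hcp, sub_self, norm_zero])]
  calc _ ≤ #jumps • B := sum_le_card_nsmul _ _ _ fun i hi =>
          hB i (by have := (mem_range.mp (mem_filter.mp hi).1); omega)
    _ ≤ (τ.D - 1 : ℝ) * B := by
      rw [nsmul_eq_mul]
      exact mul_le_mul_of_nonneg_right hcast hB0

lemma norm_sub_le_sum_norm_sub_succ (x : Fin n → E) (i j : Fin n) :
    ‖x i - x j‖ ≤ ∑ k ∈ range (n - 1), ‖extendZero x k - extendZero x (k + 1)‖ := by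
  have key : ∀ a b : Fin n, a ≤ b →
      ‖x a - x b‖ ≤ ∑ k ∈ range (n - 1), ‖extendZero x k - extendZero x (k + 1)‖ := by
    intro a b hab
    rw [← extendZero_val x a, ← extendZero_val x b, ← dist_eq_norm]
    refine (dist_le_Ico_sum_dist _ hab).trans ?_
    simp only [dist_eq_norm]
    refine sum_le_sum_of_subset_of_nonneg (fun k hk => ?_) fun k _ _ => norm_nonneg _
    simp only [mem_Ico, mem_range] at hk ⊢
    omega
  rcases le_total i j with h | h
  · exact key i j h
  · exact norm_sub_rev (x i) (x j) ▸ key j i h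

end Variation

end Seg

section Jumps

variable {n : ℕ} {H : Type*} [NormedAddCommGroup H]

lemma deltaMax_nonneg (τ : Seg n) (m : Fin n → H) : 0 ≤ deltaMax τ m := by
  unfold deltaMax
  split_ifs with h
  · refine le_trans ?_ (le_sup' (jumpAt τ m) (mem_Ioo.mpr ⟨Nat.one_pos, h⟩))
    unfold jumpAt
    split_ifs
    exacts [norm_nonneg _, le_rfl]
  · exact le_rfl

lemma Seg.ConstOnSegments.norm_extendZero_sub_succ_le_deltaMax {τ : Seg n} {m : Fin n → H}
    (hm : τ.ConstOnSegments m) {i : ℕ} (hi : i + 1 < n) :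
    ‖extendZero m i - extendZero m (i + 1)‖ ≤ deltaMax τ m := by
  by_cases hcp : i + 1 ∈ τ.changePoints
  · obtain ⟨ℓ, hℓ, hti⟩ := mem_image.mp hcp
    obtain ⟨hℓ0, hℓD⟩ := mem_Ioo.mp hℓ
    have hjump : jumpAt τ m ℓ = ‖extendZero m (i + 1) - extendZero m i‖ := by
      rw [jumpAt, dif_pos ⟨by omega, by omega⟩, extendZero_of_lt m hi,
        extendZero_of_lt m (by omega)]
      simp [hti]
    rw [norm_sub_rev, ← hjump, deltaMax, dif_pos (by omega)]
    exact le_sup' (jumpAt τ m) hℓ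
  · rw [hm.extendZero_succ hi hcp, sub_self, norm_zero]
    exact deltaMax_nonneg τ m

lemma IsTrueSeg.sum_norm_sub_succ_le {τs : Seg n} {m : Fin n → H} (hm : IsTrueSeg τs m) :
    ∑ i ∈ range (n - 1), ‖extendZero m i - extendZero m (i + 1)‖
      ≤ (τs.D - 1 : ℝ) * deltaMax τs m :=
  Seg.ConstOnSegments.sum_norm_sub_succ_le hm.1 (deltaMax_nonneg τs m)
    fun _ hi => Seg.ConstOnSegments.norm_extendZero_sub_succ_le_deltaMax hm.1 hi

lemma IsTrueSeg.norm_sub_le_mul_deltaMax {τs : Seg n} {m : Fin n → H} (hm : IsTrueSeg τs m)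
    (i j : Fin n) :
    ‖m i - m j‖ ≤ (τs.D - 1 : ℝ) * deltaMax τs m :=
  (Seg.norm_sub_le_sum_norm_sub_succ m i j).trans hm.sum_norm_sub_succ_le

end Jumps

section Residual

variable {n : ℕ} {H : Type*} [NormedAddCommGroup H] [NormedSpace ℝ H]
  {m : Fin n → H} {τs : Seg n}

lemma IsTrueSeg.norm_proj_sub_le (hm : IsTrueSeg τs m) (τ : Seg n) (i j : Fin n) :
    ‖Seg.proj τ m i - m j‖ ≤ (τs.D - 1 : ℝ) * deltaMax τs m := by
  simpa [dist_eq_norm] using τ.proj_mem_of_convex (convex_closedBall (m j) _)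
    (fun k => by simpa [dist_eq_norm] using hm.norm_sub_le_mul_deltaMax k j) i

lemma IsTrueSeg.norm_proj_sub_proj_le (hm : IsTrueSeg τs m) (τ : Seg n) (i j : Fin n) :
    ‖Seg.proj τ m i - Seg.proj τ m j‖ ≤ (τs.D - 1 : ℝ) * deltaMax τs m := by
  simpa [dist_eq_norm] using τ.proj_mem_of_convex (convex_closedBall (Seg.proj τ m j) _)
    (fun k => by simpa [dist_eq_norm, norm_sub_rev] using hm.norm_proj_sub_le τ j k) i

lemma IsTrueSeg.sum_norm_residual_sub_succ_le (hm : IsTrueSeg τs m) (τ : Seg n) :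
    ∑ i ∈ range n, ‖extendZero (m - Seg.proj τ m) i - extendZero (m - Seg.proj τ m) (i + 1)‖
      ≤ (τ.D + 1 : ℝ) * ((τs.D - 1 : ℝ) * deltaMax τs m) := by
  set K := (τs.D - 1 : ℝ) * deltaMax τs m
  set p := Seg.proj τ m
  have hK : 0 ≤ K :=
    (norm_nonneg _).trans (hm.norm_sub_le_mul_deltaMax ⟨0, τ.n_pos⟩ ⟨0, τ.n_pos⟩)
  have hp : ∑ i ∈ range (n - 1), ‖extendZero p i - extendZero p (i + 1)‖ ≤ (τ.D - 1 : ℝ) * K :=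
    (τ.constOnSegments_proj m).sum_norm_sub_succ_le hK fun i hi => by
      rw [extendZero_of_lt p (by omega), extendZero_of_lt p hi]
      exact hm.norm_proj_sub_proj_le τ _ _
  have hlast : ‖extendZero (m - p) (n - 1) - extendZero (m - p) (n - 1 + 1)‖ ≤ K := by
    rw [Nat.sub_add_cancel τ.n_pos, extendZero_self, sub_zero,
      extendZero_of_lt _ (Nat.sub_lt τ.n_pos one_pos), Pi.sub_apply, norm_sub_rev]
    exact hm.norm_proj_sub_le τ _ _
  have hstep : ∀ i ∈ range (n - 1), ‖extendZero (m - p) i - extendZero (m - p) (i + 1)‖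
      ≤ ‖extendZero m i - extendZero m (i + 1)‖ + ‖extendZero p i - extendZero p (i + 1)‖ :=
    fun i _ => by
      rw [extendZero_sub, Pi.sub_apply, Pi.sub_apply, sub_sub_sub_comm]
      exact norm_sub_le _ _
  rw [show range n = range (n - 1 + 1) by rw [Nat.sub_add_cancel τ.n_pos], sum_range_succ]
  calc _ ≤ (K + (τ.D - 1 : ℝ) * K) + K := by
        gcongr
        refine (sum_le_sum hstep).trans ?_
        rw [sum_add_distrib]
        exact add_le_add hm.sum_norm_sub_succ_le hp
    _ = (τ.D + 1 : ℝ) * K := by ring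

end Residual

lemma norm_sum_range_extendZero_le_Mmax {n : ℕ} {H : Type*} [NormedAddCommGroup H]
    (ε : Fin n → H) {k : ℕ} (hk : k ≤ n) : ‖∑ j ∈ range k, extendZero ε j‖ ≤ Mmax ε := by
  classical
  have hsum : ∑ j ∈ univ.filter (fun j : Fin n => (j : ℕ) < k), ε j
      = ∑ j ∈ range k, extendZero ε j := by
    have hrange := Fin.sum_univ_eq_sum_range (fun j => if j < k then extendZero ε j else 0) n
    simp only [extendZero_val] at hrange
    rw [sum_filter, hrange, ← sum_filter]
    congr 1
    ext j
    simp only [mem_filter, mem_range]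
    omega
  rw [← hsum]
  exact le_sup' (fun k => ‖∑ j ∈ univ.filter (fun j : Fin n => (j : ℕ) < k), ε j‖)
    (mem_range.mpr (Nat.lt_succ_of_le hk))

theorem linear_term_deterministic_bound_general {H : Type*}
    [NormedAddCommGroup H] [InnerProductSpace ℝ H]
    {n : ℕ} (μs : Fin n → H) (τs : Seg n) (hτs : IsTrueSeg τs μs)
    (ε : Fin n → H) (τ : Seg n) :
    |hinner (fun i => μs i - Seg.proj τ μs i) ε|
      ≤ 6 * (τs.D : ℝ) * (max τs.D τ.D : ℕ) * deltaMax τs μs * Mmax ε := by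
  have hM : ∀ k ≤ n, ‖∑ j ∈ range k, extendZero ε j‖ ≤ Mmax ε :=
    fun k hk => norm_sum_range_extendZero_le_Mmax ε hk
  have hM0 : 0 ≤ Mmax ε := (norm_nonneg _).trans (hM 0 n.zero_le)
  have hcount : (τ.D + 1 : ℝ) * (τs.D - 1) ≤ 6 * τs.D * (max τs.D τ.D : ℕ) := by
    have hDs : (1 : ℝ) ≤ τs.D := by exact_mod_cast τs.hD
    have hmaxs : (τs.D : ℝ) ≤ (max τs.D τ.D : ℕ) := by exact_mod_cast le_max_left _ _
    have hmax : (τ.D : ℝ) ≤ (max τs.D τ.D : ℕ) := by exact_mod_cast le_max_right _ _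
    nlinarith
  calc _ ≤ (∑ i ∈ range n, ‖extendZero (μs - Seg.proj τ μs) i
          - extendZero (μs - Seg.proj τ μs) (i + 1)‖) * Mmax ε := by
        rw [hinner_eq_sum_inner_sub]
        exact abs_sum_inner_sub_le (extendZero_self _) (sum_range_zero _) hM
    _ ≤ (τ.D + 1 : ℝ) * (τs.D - 1) * deltaMax τs μs * Mmax ε := by
        rw [mul_assoc _ (_ - 1 : ℝ)]
        exact mul_le_mul_of_nonneg_right (hτs.sum_norm_residual_sub_succ_le τ) hM0
    _ ≤ _ := by gcongr; exact deltaMax_nonneg τs μs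

/-- Lemma 5.6: `|⟨μ* − Π_τ μ*, ε⟩| ≤ 6 D_{τ*} max{D_{τ*}, D_τ} Δ̄ M_n`. -/
theorem linear_term_deterministic_bound {H : Type*}
    [NormedAddCommGroup H] [InnerProductSpace ℝ H]
    {n : ℕ} (μs : Fin n → H) (τs : Seg n) (hτs : IsTrueSeg τs μs) (hDs : 2 ≤ τs.D)
    (ε : Fin n → H) (τ : Seg n) :
    |hinner (fun i => μs i - Seg.proj τ μs i) ε|
      ≤ 6 * (τs.D : ℝ) * (max τs.D τ.D : ℕ) * deltaMax τs μs * Mmax ε :=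
  linear_term_deterministic_bound_general μs τs hτs ε τ
end
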